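/- arXiv:1812.11882 — 8 statements merged into one kernel-verified Lean document; each statement's English description precedes it below -/
import Mathlib

section
/- Let H be a commutative cancellative decomposition monoid. Suppose that every element a ∈ H admits a factorization a = s₁·s₂²·s₃³·⋯·sₙⁿ for some n ≥ 1 and square-free elements s₁,…,sₙ that are pairwise relatively prime. Then every element a ∈ H admits a factorization a = t₁·t₂·⋯·tₘ for some m ≥ 1 and square-free elements t₁,…,tₘ with tᵢ dividing tᵢ₊₁ for i = 1,…,m−1. -/
private theorem my_dvd_of_sq_dvd {H : Type*} [CancelCommMonoid H] [DecompositionMonoid H]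
    {x y d : H} (hx : Squarefree x) (h : d * d ∣ x * y) : d ∣ y := by
  obtain ⟨a, b, ha, hb, eq⟩ := exists_dvd_and_dvd_of_dvd_mul h
  have ha' : Squarefree a := Squarefree.squarefree_of_dvd ha hx
  have had : a ∣ d := by
    have hadd : a ∣ d * d := ⟨b, eq⟩
    obtain ⟨u, v, hu, hv, huv⟩ := exists_dvd_and_dvd_of_dvd_mul hadd
    rw [huv]
    exact (IsRelPrime.of_squarefree_mul (huv ▸ ha')).mul_dvd hu hv
  obtain ⟨c, hc⟩ := had
  have hbc : b = d * c := by
    have : a * b = a * (d * c) := by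
      rw [← eq, hc]; ac_rfl
    exact mul_left_cancel this
  exact (Dvd.intro c hbc.symm).trans hb

private theorem my_sqf_mul {H : Type*} [CancelCommMonoid H] [DecompositionMonoid H]
    {x y : H} (hx : Squarefree x) (hy : Squarefree y) (hxy : IsRelPrime x y) :
    Squarefree (x * y) := fun d hd =>
  hxy (my_dvd_of_sq_dvd hy (mul_comm x y ▸ hd)) (my_dvd_of_sq_dvd hx hd)

private theorem my_sqf_prod {H : Type*} [CancelCommMonoid H] [DecompositionMonoid H]
    {ι : Type*} [DecidableEq ι] (f : ι → H) (A : Finset ι)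
    (h1 : ∀ i ∈ A, Squarefree (f i))
    (h2 : ∀ i ∈ A, ∀ j ∈ A, i ≠ j → IsRelPrime (f i) (f j)) :
    Squarefree (∏ i ∈ A, f i) := by
  induction A using Finset.induction_on with
  | empty => simpa using squarefree_one
  | @insert b t hbt ih =>
    rw [Finset.prod_insert hbt]
    refine my_sqf_mul (h1 b (Finset.mem_insert_self b t))
      (ih (fun i hi => h1 i (Finset.mem_insert_of_mem hi))
        (fun i hi j hj hij => h2 i (Finset.mem_insert_of_mem hi) j
          (Finset.mem_insert_of_mem hj) hij)) ?_
    exact IsRelPrime.prod_right fun i hi =>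
      h2 b (Finset.mem_insert_self b t) i (Finset.mem_insert_of_mem hi)
        (fun h => hbt (h ▸ hi))

theorem stmt_3 {H : Type*} [CancelCommMonoid H] [DecompositionMonoid H]
    (hyp : ∀ a : H, ∃ n : ℕ, 1 ≤ n ∧ ∃ s : Fin n → H,
      (∀ i, Squarefree (s i)) ∧ (∀ i j, i ≠ j → IsRelPrime (s i) (s j)) ∧
      a = ∏ i, (s i) ^ (i.val + 1)) :
    ∀ a : H, ∃ m : ℕ, 1 ≤ m ∧ ∃ t : Fin m → H,
      (∀ i, Squarefree (t i)) ∧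
      (∀ i : ℕ, ∀ h : i + 1 < m, t ⟨i, Nat.lt_of_succ_lt h⟩ ∣ t ⟨i + 1, h⟩) ∧
      a = ∏ i, t i := by
  intro a
  obtain ⟨n, hn, s, hsq, hrel, heq⟩ := hyp a
  refine ⟨n, hn, fun j => ∏ i ∈ Finset.univ.filter (fun i : Fin n => n - 1 - j.val ≤ i.val),
    s i, ?_, ?_, ?_⟩
  · intro j
    exact my_sqf_prod s _ (fun i _ => hsq i) (fun i _ k _ hik => hrel i k hik)
  · intro i h
    apply Finset.prod_dvd_prod_of_subset
    intro k hk
    simp only [Finset.mem_filter, Finset.mem_univ, true_and] at hk ⊢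
    omega
  · rw [heq]
    rw [Finset.prod_comm' (t' := Finset.univ) (s' := fun i : Fin n =>
      Finset.univ.filter (fun j : Fin n => n - 1 - j.val ≤ i.val))
      (t := fun j : Fin n => Finset.univ.filter (fun i : Fin n => n - 1 - j.val ≤ i.val))]
    · refine Finset.prod_congr rfl fun i _ => ?_
      rw [Finset.prod_const]
      congr 1
      have hcard : (Finset.univ.filter (fun j : Fin n => n - 1 - j.val ≤ i.val))
          = Finset.Ici (⟨n - 1 - i.val, by omega⟩ : Fin n) := by
        ext j
        simp only [Finset.mem_filter, Finset.mem_univ, true_and, Finset.mem_Ici,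
          Fin.le_def]
        have := j.isLt
        have := i.isLt
        constructor <;> intro <;> omega
      rw [hcard, Fin.card_Ici]
      simp only [Fin.val_mk]
      have := i.isLt
      omega
    · intro j i
      simp
end

section
/- Let H be a commutative cancellative GCD monoid. Suppose that every element a ∈ H admits a factorization a = s₀·s₁²·s₂^(2²)·⋯·sₙ^(2ⁿ) for some n ≥ 0 and square-free elements s₀,…,sₙ. Then every element a ∈ H admits a factorization a = t₁·t₂²·t₃³·⋯·tₘᵐ for some m ≥ 1 and square-free elements t₁,…,tₘ that are pairwise relatively prime. -/
/-!
With gcds and cancellation every element is primal, so the usual calculus of relatively prime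
elements is available. Induct on the length of `a = s₀ s₁² ⋯ sₙ^(2ⁿ)`: write `a = s b²` with
`s` squarefree and `b = u₁ u₂² ⋯ u_m^m` already decomposed. Split `u_j = d_j v_j` with
`d_j = gcd(s, u_j)`; the `d_j` are pairwise coprime divisors of `s`, so `s = r ∏ d_j`, and
`a = r ∏ d_j^(2j+1) v_j^(2j)`. Squarefreeness of `s` and of the `u_j` makes all of
`r, d_j, v_j` pairwise relatively prime, and since the exponents are distinct this is again
a decomposition of the required shape.
-/

open Finset Function

theorem decompositionMonoid_of_exists_gcd {M : Type*} [CancelCommMonoid M]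
    (hgcd : ∀ a b : M, ∃ d : M, d ∣ a ∧ d ∣ b ∧ ∀ c : M, c ∣ a → c ∣ b → c ∣ d) :
    DecompositionMonoid M where
  primal a b c habc := by
    obtain ⟨g, ⟨a', rfl⟩, hgb, hg⟩ := hgcd a b
    refine ⟨g, a', hgb, ?_, rfl⟩
    -- `g a'` divides `gcd (g a' c) (b c) = c e`, where `e ∣ g` because `e` divides `g a'` and `b`.
    obtain ⟨D, hDa, hDb, hD⟩ := hgcd (g * a' * c) (b * c)
    obtain ⟨e, rfl⟩ := hD c (dvd_mul_left c _) (dvd_mul_left c b)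
    have hcancel {x y : M} (h : c * x ∣ y * c) : x ∣ y := by
      obtain ⟨k, hk⟩ := h
      exact ⟨k, mul_left_cancel (a := c) (by rw [mul_comm, hk, mul_assoc])⟩
    have he : e ∣ g := hg e (hcancel hDa) (hcancel hDb)
    obtain ⟨k, hk⟩ := (hD (g * a') (dvd_mul_right _ _) habc).trans (mul_dvd_mul_left c he)
    exact ⟨k, mul_left_cancel (a := g) (by rw [← mul_assoc, ← hk, mul_comm])⟩

section

variable {M : Type*} [CommMonoid M]

structure IsSquarefreeFactorization {ι : Type*} [Fintype ι] (a : M) (t : ι → M) (e : ι → ℕ) :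
    Prop where
  squarefree : ∀ i, Squarefree (t i)
  isRelPrime : Pairwise (IsRelPrime on t)
  eq_prod : a = ∏ i, t i ^ e i

theorem IsSquarefreeFactorization.exists_fin {ι : Type*} [Fintype ι] {a : M} {t : ι → M}
    {e : ι → ℕ} (h : IsSquarefreeFactorization a t e) (he : Injective e) :
    ∃ m, 1 ≤ m ∧ ∃ T : Fin m → M, IsSquarefreeFactorization a T fun k => k.val + 1 := by
  classical
  set T : ℕ → M := extend e t (fun _ => 1)
  have hT (n : ℕ) : (∃ i, e i = n ∧ T n = t i) ∨ T n = 1 := by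
    by_cases hn : ∃ i, e i = n
    · obtain ⟨i, rfl⟩ := hn
      exact Or.inl ⟨i, rfl, he.extend_apply t _ i⟩
    · exact Or.inr (extend_apply' t _ n hn)
  -- A trailing factor `1` makes the length positive.
  refine ⟨univ.sup e + 1, by omega, fun k => T (k + 1), ⟨fun k => ?_, fun k l hkl => ?_, ?_⟩⟩
  · rcases hT (k + 1) with ⟨i, -, hi⟩ | h1
    · exact hi ▸ h.squarefree i
    · exact h1 ▸ squarefree_one
  · change IsRelPrime (T (k + 1)) (T (l + 1))
    rcases hT (k + 1) with ⟨i, hi, hTi⟩ | h1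
    · rcases hT (l + 1) with ⟨j, hj, hTj⟩ | h1
      · rw [hTi, hTj]
        refine h.isRelPrime fun hij => hkl (Fin.ext ?_)
        rw [hij] at hi
        omega
      · exact h1 ▸ isRelPrime_one_right
    · exact h1 ▸ isRelPrime_one_left
  · have hsub : image e univ ⊆ range (univ.sup e + 2) := fun n hn => by
      obtain ⟨i, -, rfl⟩ := mem_image.1 hn
      have := le_sup (f := e) (mem_univ i)
      exact mem_range.2 (by omega)
    rw [Fin.prod_univ_eq_prod_range (fun n => T (n + 1) ^ (n + 1)), h.eq_prod]
    calc ∏ i, t i ^ e i = ∏ i, T (e i) ^ e i := by simp only [T, he.extend_apply]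
      _ = ∏ n ∈ image e univ, T n ^ n := (prod_image (f := fun n => T n ^ n) he.injOn).symm
      _ = ∏ n ∈ range (univ.sup e + 2), T n ^ n := prod_subset hsub fun n _ hn => by
          rcases hT n with ⟨i, rfl, -⟩ | h1
          · exact absurd (mem_image_of_mem e (mem_univ i)) hn
          · rw [h1, one_pow]
      _ = ∏ n ∈ range (univ.sup e + 1), T (n + 1) ^ (n + 1) := by
          rw [prod_range_succ', pow_zero, mul_one]

theorem pairwise_isRelPrime_option_elim_sum_elim {ι : Type*} {r : M} {d v : ι → M}
    (hprod : Pairwise (IsRelPrime on fun j => d j * v j)) (hdv : ∀ j, IsRelPrime (d j) (v j))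
    (hrd : ∀ j, IsRelPrime r (d j)) (hrv : ∀ j, IsRelPrime r (v j)) :
    Pairwise (IsRelPrime on fun i : Option (ι ⊕ ι) => i.elim r (Sum.elim d v)) := by
  have hsum : Pairwise (IsRelPrime on Sum.elim d v) := by
    rintro (j | j) (k | k) hjk
    · exact ((hprod (ne_of_apply_ne Sum.inl hjk)).of_mul_left_left).of_mul_right_left
    · obtain rfl | hjk := eq_or_ne j k
      · exact hdv j
      · exact ((hprod hjk).of_mul_left_left).of_mul_right_right
    · obtain rfl | hjk := eq_or_ne j k
      · exact (hdv j).symm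
      · exact ((hprod hjk).of_mul_left_right).of_mul_right_left
    · exact ((hprod (ne_of_apply_ne Sum.inr hjk)).of_mul_left_right).of_mul_right_right
  have hr : ∀ i, IsRelPrime r (Sum.elim d v i) := Sum.rec hrd hrv
  rintro (_ | i) (_ | k) hik
  · exact absurd rfl hik
  · exact hr k
  · exact (hr i).symm
  · exact hsum (ne_of_apply_ne some hik)

theorem exists_isSquarefreeFactorization_mul_sq [DecompositionMonoid M]
    (hgcd : ∀ a b : M, ∃ d : M, d ∣ a ∧ d ∣ b ∧ ∀ c : M, c ∣ a → c ∣ b → c ∣ d)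
    {s b : M} {m : ℕ} {u : Fin m → M} (hs : Squarefree s)
    (hb : IsSquarefreeFactorization b u fun j => j.val + 1) :
    ∃ m, 1 ≤ m ∧ ∃ T : Fin m → M, IsSquarefreeFactorization (s * b ^ 2) T fun k => k.val + 1 := by
  choose d hds hdu hd using fun j => hgcd s (u j)
  choose v hv using hdu
  obtain ⟨r, hsr⟩ : ∏ j, d j ∣ s := Fintype.prod_dvd_of_isRelPrime
    (fun j k hjk => ((hb.isRelPrime hjk).of_dvd_left ⟨v j, hv j⟩).of_dvd_right ⟨v k, hv k⟩) hds
  have hrs : r ∣ s := Dvd.intro_left _ hsr.symm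
  have hrd (j : Fin m) : IsRelPrime r (d j) := fun c hcr hcd =>
    hs c (hsr ▸ mul_dvd_mul (hcd.trans (dvd_prod_of_mem d (mem_univ j))) hcr)
  have hrv (j : Fin m) : IsRelPrime r (v j) := fun c hcr hcv =>
    hrd j hcr (hd j c (hcr.trans hrs) (hcv.trans (Dvd.intro_left _ (hv j).symm)))
  have hdv (j : Fin m) : IsRelPrime (d j) (v j) :=
    IsRelPrime.of_squarefree_mul (hv j ▸ hb.squarefree j)
  have hpow (j : Fin m) :
      d j * ((d j * v j) ^ (j.val + 1)) ^ 2 = d j ^ (2 * j.val + 3) * v j ^ (2 * j.val + 2) := by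
    rw [← pow_mul, mul_pow, ← mul_assoc, ← pow_succ']
    ring_nf
  refine IsSquarefreeFactorization.exists_fin (t := fun i => i.elim r (Sum.elim d v))
    (e := fun i : Option (Fin m ⊕ Fin m) => i.elim 1
      (Sum.elim (fun j => 2 * j.val + 3) fun j => 2 * j.val + 2)) ⟨?_, ?_, ?_⟩ ?_
  · rintro (_ | j | j)
    · exact hs.squarefree_of_dvd hrs
    · exact hs.squarefree_of_dvd (hds j)
    · exact (hb.squarefree j).squarefree_of_dvd (Dvd.intro_left _ (hv j).symm)
  · exact pairwise_isRelPrime_option_elim_sum_elim (funext hv ▸ hb.isRelPrime) hdv hrd hrv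
  · simp only [Fintype.prod_option, Fintype.prod_sum_type, Option.elim, Sum.elim_inl,
      Sum.elim_inr, pow_one, hb.eq_prod, hv]
    rw [hsr, ← prod_pow, mul_comm (∏ j, d j) r, mul_assoc, ← prod_mul_distrib,
      ← prod_mul_distrib]
    simp only [hpow]
  · rintro (_ | j | j) (_ | k | k) h <;>
      simp only [Option.elim_none, Option.elim_some, Sum.elim_inl, Sum.elim_inr, Option.some.injEq,
        Sum.inl.injEq, Sum.inr.injEq, reduceCtorEq, Fin.ext_iff] at h ⊢ <;> omega

theorem exists_isSquarefreeFactorization_prod_pow_two_pow [DecompositionMonoid M]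
    (hgcd : ∀ a b : M, ∃ d : M, d ∣ a ∧ d ∣ b ∧ ∀ c : M, c ∣ a → c ∣ b → c ∣ d) :
    ∀ (n : ℕ) (s : Fin (n + 1) → M), (∀ i, Squarefree (s i)) →
      ∃ m, 1 ≤ m ∧ ∃ t : Fin m → M,
        IsSquarefreeFactorization (∏ i, s i ^ 2 ^ i.val) t fun k => k.val + 1
  | 0, s, hs => ⟨1, le_rfl, s, ⟨hs, Subsingleton.pairwise, by simp⟩⟩
  | n + 1, s, hs => by
    obtain ⟨m, -, u, hu⟩ :=
      exists_isSquarefreeFactorization_prod_pow_two_pow hgcd n (fun i => s i.succ) fun i => hs _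
    have hsplit : ∏ i, s i ^ 2 ^ i.val = s 0 * (∏ i : Fin (n + 1), s i.succ ^ 2 ^ i.val) ^ 2 := by
      rw [Fin.prod_univ_succ, ← prod_pow]
      simp only [Fin.val_zero, pow_zero, pow_one, Fin.val_succ, pow_succ, pow_mul]
    exact hsplit ▸ exists_isSquarefreeFactorization_mul_sq hgcd (hs 0) hu

end

theorem stmt_4 {H : Type*} [CancelCommMonoid H]
    (hgcd : ∀ a b : H, ∃ d : H, d ∣ a ∧ d ∣ b ∧ ∀ c : H, c ∣ a → c ∣ b → c ∣ d)
    (hyp : ∀ a : H, ∃ n : ℕ, ∃ s : Fin (n + 1) → H,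
      (∀ i, Squarefree (s i)) ∧ a = ∏ i, (s i) ^ (2 ^ i.val)) :
    ∀ a : H, ∃ m : ℕ, 1 ≤ m ∧ ∃ t : Fin m → H,
      (∀ i, Squarefree (t i)) ∧ (∀ i j, i ≠ j → IsRelPrime (t i) (t j)) ∧
      a = ∏ i, (t i) ^ (i.val + 1) := by
  have := decompositionMonoid_of_exists_gcd hgcd
  intro a
  obtain ⟨n, s, hs, rfl⟩ := hyp a
  obtain ⟨m, hm, t, ht⟩ := exists_isSquarefreeFactorization_prod_pow_two_pow hgcd n s hs
  exact ⟨m, hm, t, ht.squarefree, fun _ _ hij => ht.isRelPrime hij, ht.eq_prod⟩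
end

section
/- Let H be a commutative cancellative monoid in which every element a can be written a = b²·c with c square-free. Let M be a submonoid of H such that for every a ∈ H and every square-free b ∈ H, if a²·b ∈ M then a ∈ M and a·b ∈ M. Then every atom of M is square-free in H. -/
/-!
Write an atom `a` as `b ^ 2 * c` with `c` square-free. The closure property of `M` puts both `b`
and `b * c` in `M`, so the factorisation `a = b * (b * c)` forces `b` to be a unit. Then `a` is
associated to `c`, hence square-free.
-/

theorem Squarefree.sq_mul_of_isUnit {H : Type*} [CommMonoid H] {b c : H} (hc : Squarefree c)
    (hb : IsUnit b) : Squarefree (b ^ 2 * c) :=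
  hc.squarefree_of_dvd ((hb.pow 2).mul_left_dvd.2 dvd_rfl)

theorem stmt_5_general {H : Type*} [CancelCommMonoid H]
    (hext : ∀ a : H, ∃ b c : H, Squarefree c ∧ a = b ^ 2 * c)
    (M : Submonoid H)
    (hM : ∀ a b : H, Squarefree b → a ^ 2 * b ∈ M → a ∈ M ∧ a * b ∈ M)
    (a : H) (haM : a ∈ M)
    (hatom : ∀ b c : H, b ∈ M → c ∈ M → a = b * c →
      (∃ u ∈ M, b * u = 1) ∨ (∃ u ∈ M, c * u = 1)) :
    Squarefree a := by
  obtain ⟨b, c, hc, rfl⟩ := hext a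
  obtain ⟨hbM, hbcM⟩ := hM b c hc haM
  have hb : IsUnit b := by
    rcases hatom b (b * c) hbM hbcM (by rw [sq, mul_assoc]) with ⟨u, -, hu⟩ | ⟨u, -, hu⟩
    · exact .of_mul_eq_one u hu
    · exact isUnit_of_mul_isUnit_left (.of_mul_eq_one u hu)
  exact hc.sq_mul_of_isUnit hb

theorem stmt_5 {H : Type*} [CancelCommMonoid H]
    (hext : ∀ a : H, ∃ b c : H, Squarefree c ∧ a = b ^ 2 * c)
    (M : Submonoid H)
    (hM : ∀ a b : H, Squarefree b → a ^ 2 * b ∈ M → a ∈ M ∧ a * b ∈ M)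
    (a : H) (haM : a ∈ M)
    (hnu : ¬ ∃ u ∈ M, a * u = 1)
    (hatom : ∀ b c : H, b ∈ M → c ∈ M → a = b * c →
      (∃ u ∈ M, b * u = 1) ∨ (∃ u ∈ M, c * u = 1)) :
    Squarefree a :=
  stmt_5_general hext M hM a haM hatom
end

section
/- Let H be a factorial commutative cancellative monoid and M a submonoid of H containing every unit of H. Then the following are equivalent: (i) for every a ∈ H and every square-free b ∈ H, a²·b ∈ M implies a ∈ M and a·b ∈ M; (iv) for every n ≥ 1 and square-free elements s₁,…,sₙ ∈ H with sᵢ dividing sᵢ₊₁ for i = 1,…,n−1, if s₁·s₂·⋯·sₙ ∈ M then s₁, s₂, …, sₙ ∈ M. -/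
/-!
Deal a chain `s₁, s₂, …` of square-free elements, each divisible by the next, alternately into
two hands `A = s₁ s₃ ⋯` and `B = s₂ s₄ ⋯`. Pairing `s₁ / s₂, s₃ / s₄, …` gives `A = B b` with
`b ∣ s₁`, so `b` is square-free and the product of the chain is `B² b`. Condition (i) puts both
hands in `M`, and we recurse on the two shorter chains.

Conversely, given `a² b` with `b` square-free, start from the chain `[b]` and insert the prime
factors `p` of `a` one at a time, multiplying by `p` the first element not divisible by `p` and
its successor. This keeps the chain square-free and multiplies each hand by `p`, so the final
chain has hands `a b` and `a`; applying (iv) to it puts both in `M`.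
-/

namespace List

variable {α : Type*}

def deal : List α → List α × List α
  | [] => ([], [])
  | a :: l => (a :: l.deal.2, l.deal.1)

theorem deal_sublist : ∀ l : List α, l.deal.1.Sublist l ∧ l.deal.2.Sublist l
  | [] => by simp [deal]
  | a :: l => ⟨(deal_sublist l).2.cons_cons a, (deal_sublist l).1.cons a⟩

theorem mem_or_mem_deal {x : α} : ∀ {l : List α}, x ∈ l → x ∈ l.deal.1 ∨ x ∈ l.deal.2
  | a :: l, h => by
    rcases mem_cons.mp h with rfl | h
    · simp [deal]
    · have := mem_or_mem_deal h
      simp only [deal, mem_cons]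
      tauto

theorem prod_deal [CommMonoid α] : ∀ l : List α, l.deal.1.prod * l.deal.2.prod = l.prod
  | [] => by simp [deal]
  | a :: l => by simp only [deal, prod_cons, ← prod_deal l]; ac_rfl

end List

section Halving

variable {M : Type*} [CommMonoid M]

theorem exists_dvd_prod_deal_fst_eq {d : M} : ∀ {l : List M}, l.Pairwise (fun x y => y ∣ x) →
    (∀ x ∈ l, x ∣ d) → ∃ b, b ∣ d ∧ l.deal.1.prod = l.deal.2.prod * b
  | [], _, _ => ⟨1, one_dvd d, by simp [List.deal]⟩
  | [x], _, hd => ⟨x, hd x (by simp), by simp [List.deal]⟩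
  | x :: y :: t, hl, hd => by
    simp only [List.pairwise_cons, List.mem_cons, forall_eq_or_imp] at hl
    obtain ⟨⟨⟨e, rfl⟩, -⟩, hyt, ht⟩ := hl
    obtain ⟨b, hby, hb⟩ := exists_dvd_prod_deal_fst_eq ht hyt
    refine ⟨e * b, ?_, ?_⟩
    · exact (mul_comm y e ▸ mul_dvd_mul_left e hby).trans (hd _ (by simp))
    · simp only [List.deal, List.prod_cons, hb]
      ac_rfl

theorem forall_mem_of_prod_mem {S : Submonoid M}
    (hS : ∀ a b : M, Squarefree b → a ^ 2 * b ∈ S → a ∈ S ∧ a * b ∈ S) (l : List M)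
    (hsq : ∀ x ∈ l, Squarefree x) (hl : l.Pairwise (fun x y => y ∣ x)) (hprod : l.prod ∈ S) :
    ∀ x ∈ l, x ∈ S := by
  match l, hl with
  | [], _ => simp
  | [x], _ => simpa using hprod
  | x :: y :: t, hl =>
    obtain ⟨b, hbx, hb⟩ := exists_dvd_prod_deal_fst_eq (d := x) hl
      (List.forall_mem_cons.mpr ⟨dvd_rfl, (List.pairwise_cons.mp hl).1⟩)
    have hsplit : (x :: y :: t).deal.2.prod ^ 2 * b = (x :: y :: t).prod := by
      rw [← List.prod_deal (x :: y :: t), hb, sq, mul_right_comm]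
    obtain ⟨hsnd, hfst⟩ :=
      hS _ b ((hsq x (by simp)).squarefree_of_dvd hbx) (hsplit ▸ hprod)
    rw [← hb] at hfst
    intro z hz
    rcases List.mem_or_mem_deal hz with hz | hz
    · exact forall_mem_of_prod_mem hS _ (fun w hw => hsq w ((List.deal_sublist _).1.subset hw))
        (hl.sublist (List.deal_sublist _).1) hfst z hz
    · exact forall_mem_of_prod_mem hS _ (fun w hw => hsq w ((List.deal_sublist _).2.subset hw))
        (hl.sublist (List.deal_sublist _).2) hsnd z hz
termination_by l.length
decreasing_by
  all_goals
    simp only [List.deal, List.length_cons]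
    have := (List.deal_sublist t).1.length_le
    have := (List.deal_sublist t).2.length_le
    omega

end Halving

section Factorial

variable {H : Type*}

def IsPrimeElement [CommMonoid H] (p : H) : Prop :=
  ¬ IsUnit p ∧ ∀ b c : H, p ∣ b * c → p ∣ b ∨ p ∣ c

variable (H) in
def IsFactorial [CommMonoid H] : Prop :=
  ∀ a : H, IsUnit a ∨ ∃ l : Multiset H, (∀ p ∈ l, IsPrimeElement p) ∧ l.prod = a

theorem IsPrimeElement.mul_dvd [CommMonoid H] {p x z : H} (hp : IsPrimeElement p) (hpz : p ∣ z)
    (hxz : x ∣ z) (hpx : ¬ p ∣ x) : p * x ∣ z := by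
  obtain ⟨d, rfl⟩ := hxz
  obtain ⟨e, rfl⟩ := (hp.2 x d hpz).resolve_left hpx
  exact ⟨e, by ac_rfl⟩

theorem IsPrimeElement.dvd_symm [CancelCommMonoid H] {p q : H} (hp : IsPrimeElement p)
    (hq : IsPrimeElement q) (h : q ∣ p) : p ∣ q := by
  obtain ⟨r, rfl⟩ := h
  refine (hp.2 q r dvd_rfl).resolve_right fun ⟨s, hs⟩ => hq.1 (.of_mul_eq_one s ?_)
  refine mul_left_cancel (a := r) ?_
  calc r * (q * s) = q * r * s := by ac_rfl
    _ = r * 1 := by rw [← hs, mul_one]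

theorem IsFactorial.squarefree_of_forall [CommMonoid H] (hH : IsFactorial H) {x : H}
    (h : ∀ q, IsPrimeElement q → ¬ q * q ∣ x) : Squarefree x := by
  intro c hc
  rcases hH c with hu | ⟨l, hl, rfl⟩
  · exact hu
  rcases Multiset.empty_or_exists_mem l with rfl | ⟨q, hq⟩
  · exact isUnit_one
  · exact absurd ((mul_dvd_mul (Multiset.dvd_prod hq) (Multiset.dvd_prod hq)).trans hc)
      (h q (hl q hq))

theorem IsFactorial.squarefree_mul [CancelCommMonoid H] (hH : IsFactorial H) {p x : H}
    (hp : IsPrimeElement p) (hx : Squarefree x) (hpx : ¬ p ∣ x) : Squarefree (p * x) := by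
  refine hH.squarefree_of_forall fun q hq hqq => ?_
  by_cases hqp : q ∣ p
  · have hpq := hp.dvd_symm hq hqp
    exact hpx ((IsLeftRegular.all p).dvd_cancel_left.mp ((mul_dvd_mul hpq hpq).trans hqq))
  · obtain ⟨y, rfl⟩ := (hq.2 p x (dvd_of_mul_right_dvd hqq)).resolve_left hqp
    have hqpy : q ∣ p * y :=
      (IsLeftRegular.all q).dvd_cancel_left.mp (by rwa [mul_left_comm] at hqq)
    exact hq.1 (hx q (mul_dvd_mul_left q ((hq.2 p y hqpy).resolve_left hqp)))

open Classical in
noncomputable def insertSq [CommMonoid H] (p : H) : List H → List H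
  | [] => [p, p]
  | x :: l => if p ∣ x then x :: insertSq p l else p * x :: p * l.headD 1 :: l.tail

theorem prod_deal_insertSq [CommMonoid H] (p : H) (w : List H) :
    (insertSq p w).deal.1.prod = p * w.deal.1.prod ∧
      (insertSq p w).deal.2.prod = p * w.deal.2.prod := by
  fun_induction insertSq p w with
  | case1 => simp [List.deal]
  | case2 x l hpx ih =>
    simp only [List.deal, List.prod_cons, ih]
    exact ⟨mul_left_comm .., trivial⟩
  | case3 x l hpx => cases l <;> simp [List.deal, mul_assoc]

theorem IsPrimeElement.isChain_insertSq [CommMonoid H] {p : H} (hp : IsPrimeElement p)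
    {w : List H} (hw : w.IsChain (fun x y => y ∣ x)) :
    (insertSq p w).IsChain (fun x y => y ∣ x) := by
  fun_induction insertSq p w with
  | case1 => simp
  | case2 x l hpx ih =>
    rw [List.isChain_cons] at hw ⊢
    refine ⟨?_, ih hw.2⟩
    cases l with
    | nil => simpa [insertSq] using hpx
    | cons y r =>
      have hyx : y ∣ x := hw.1 y rfl
      by_cases hpy : p ∣ y
      · simpa [insertSq, hpy] using hyx
      · simpa [insertSq, hpy] using hp.mul_dvd hpx hyx hpy
  | case3 x l hpx =>
    rw [List.isChain_cons] at hw
    cases l with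
    | nil => simp
    | cons y r =>
      simp only [List.headD_cons, List.tail_cons, List.isChain_cons]
      refine ⟨?_, ?_, (List.isChain_cons.mp hw.2).2⟩
      · simpa using mul_dvd_mul_left p (hw.1 y rfl)
      · exact fun z hz => ((List.isChain_cons.mp hw.2).1 z hz).trans (dvd_mul_left y p)

theorem IsFactorial.squarefree_of_mem_insertSq [CancelCommMonoid H] (hH : IsFactorial H)
    {p : H} (hp : IsPrimeElement p) {w : List H} (hw : w.IsChain (fun x y => y ∣ x))
    (hsq : ∀ x ∈ w, Squarefree x) : ∀ z ∈ insertSq p w, Squarefree z := by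
  fun_induction insertSq p w with
  | case1 =>
    simpa using hH.squarefree_mul hp squarefree_one fun h => hp.1 (isUnit_of_dvd_one h)
  | case2 x l hpx ih =>
    simp only [List.mem_cons, forall_eq_or_imp] at hsq ⊢
    exact ⟨hsq.1, ih (List.isChain_cons.mp hw).2 hsq.2⟩
  | case3 x l hpx =>
    simp only [List.mem_cons, forall_eq_or_imp] at hsq ⊢
    have hpx_sq := hH.squarefree_mul hp hsq.1 hpx
    refine ⟨hpx_sq, hpx_sq.squarefree_of_dvd (mul_dvd_mul_left p ?_),
      fun z hz => hsq.2 z (List.mem_of_mem_tail hz)⟩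
    cases l with
    | nil => exact one_dvd x
    | cons y r => exact (List.isChain_cons.mp hw).1 y rfl

theorem IsFactorial.exists_isChain_deal_prod_eq_multiset [CancelCommMonoid H]
    (hH : IsFactorial H) {b : H} (hb : Squarefree b) (l : Multiset H)
    (hl : ∀ p ∈ l, IsPrimeElement p) :
    ∃ w : List H, (∀ x ∈ w, Squarefree x) ∧ w.IsChain (fun x y => y ∣ x) ∧
      w.deal.1.prod = l.prod * b ∧ w.deal.2.prod = l.prod := by
  induction l using Multiset.induction_on with
  | empty => exact ⟨[b], by simpa using hb, by simp, by simp [List.deal], by simp [List.deal]⟩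
  | cons p l ih =>
    rw [Multiset.forall_mem_cons] at hl
    obtain ⟨w, hsq, hw, hfst, hsnd⟩ := ih hl.2
    obtain ⟨hfst', hsnd'⟩ := prod_deal_insertSq p w
    refine ⟨insertSq p w, hH.squarefree_of_mem_insertSq hl.1 hw hsq, hl.1.isChain_insertSq hw,
      ?_, ?_⟩
    · rw [hfst', hfst, Multiset.prod_cons, mul_assoc]
    · rw [hsnd', hsnd, Multiset.prod_cons]

theorem IsFactorial.exists_isChain_deal_prod_eq [CancelCommMonoid H] (hH : IsFactorial H)
    (a : H) {b : H} (hb : Squarefree b) :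
    ∃ w : List H, (∀ x ∈ w, Squarefree x) ∧ w.IsChain (fun x y => y ∣ x) ∧
      w.deal.1.prod = a * b ∧ w.deal.2.prod = a := by
  rcases hH a with ha | ⟨l, hl, rfl⟩
  · refine ⟨[a * b, a], ?_, by simp, by simp [List.deal], by simp [List.deal]⟩
    simpa using ⟨hb.squarefree_of_dvd (ha.mul_left_dvd.mpr dvd_rfl), ha.squarefree⟩
  · exact hH.exists_isChain_deal_prod_eq_multiset hb l hl

end Factorial

theorem forall_fin_chain_iff_forall_list_chain {H : Type*} [CommMonoid H] (M : Submonoid H) :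
    (∀ n : ℕ, 1 ≤ n → ∀ s : Fin n → H, (∀ i, Squarefree (s i)) →
      (∀ i : ℕ, ∀ h : i + 1 < n, s ⟨i, Nat.lt_of_succ_lt h⟩ ∣ s ⟨i + 1, h⟩) →
      (∏ i, s i) ∈ M → ∀ i, s i ∈ M) ↔
    ∀ l : List H, (∀ x ∈ l, Squarefree x) → l.IsChain (fun x y => y ∣ x) → l.prod ∈ M →
      ∀ x ∈ l, x ∈ M := by
  constructor
  · intro h l hsq hl hprod x hx
    have hchain := List.isChain_iff_getElem.mp (List.isChain_reverse.mpr hl)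
    have hmem := h l.reverse.length (by rw [List.length_reverse]; exact List.length_pos_of_mem hx)
      l.reverse.get (fun i => hsq _ (List.mem_reverse.mp (List.get_mem _ _)))
      (fun i hi => hchain i hi) (by rwa [← List.prod_ofFn, List.ofFn_get, List.prod_reverse])
    obtain ⟨i, rfl⟩ := List.mem_iff_get.mp (List.mem_reverse.mpr hx)
    exact hmem i
  · intro h n _ s hsq hs hprod i
    refine h (List.ofFn s).reverse (by simpa using hsq) ?_
      (by rwa [List.prod_reverse, List.prod_ofFn]) _ (by simp)
    refine List.isChain_reverse.mpr (List.isChain_iff_getElem.mpr fun i hi => ?_)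
    simpa using hs i (by simpa using hi)

theorem stmt_6_general {H : Type*} [CancelCommMonoid H]
    (hfact : ∀ a : H, IsUnit a ∨ ∃ l : Multiset H, (∀ p ∈ l, ¬ IsUnit p ∧ ∀ b c : H, p ∣ b * c → p ∣ b ∨ p ∣ c) ∧ l.prod = a)
    (M : Submonoid H) :
    (∀ a b : H, Squarefree b → a ^ 2 * b ∈ M → a ∈ M ∧ a * b ∈ M) ↔
    (∀ n : ℕ, 1 ≤ n → ∀ s : Fin n → H, (∀ i, Squarefree (s i)) →
      (∀ i : ℕ, ∀ h : i + 1 < n, s ⟨i, Nat.lt_of_succ_lt h⟩ ∣ s ⟨i + 1, h⟩) →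
      (∏ i, s i) ∈ M → ∀ i, s i ∈ M) := by
  rw [forall_fin_chain_iff_forall_list_chain]
  refine ⟨fun hI l hsq hl => forall_mem_of_prod_mem hI l hsq hl.pairwise, fun hIV a b hb hab => ?_⟩
  obtain ⟨w, hsq, hw, hfst, hsnd⟩ := IsFactorial.exists_isChain_deal_prod_eq hfact a hb
  have hprod : w.prod = a ^ 2 * b := by rw [← List.prod_deal, hfst, hsnd, sq, mul_right_comm]
  have hwM := hIV w hsq hw (hprod ▸ hab)
  rw [← hfst, ← hsnd]
  exact ⟨M.list_prod_mem fun x hx => hwM x ((List.deal_sublist w).2.subset hx),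
    M.list_prod_mem fun x hx => hwM x ((List.deal_sublist w).1.subset hx)⟩

theorem stmt_6 {H : Type*} [CancelCommMonoid H]
    (hfact : ∀ a : H, IsUnit a ∨ ∃ l : Multiset H, (∀ p ∈ l, ¬ IsUnit p ∧ ∀ b c : H, p ∣ b * c → p ∣ b ∨ p ∣ c) ∧ l.prod = a)
    (M : Submonoid H) (hunits : ∀ u : H, IsUnit u → u ∈ M) :
    (∀ a b : H, Squarefree b → a ^ 2 * b ∈ M → a ∈ M ∧ a * b ∈ M) ↔
    (∀ n : ℕ, 1 ≤ n → ∀ s : Fin n → H, (∀ i, Squarefree (s i)) →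
      (∀ i : ℕ, ∀ h : i + 1 < n, s ⟨i, Nat.lt_of_succ_lt h⟩ ∣ s ⟨i + 1, h⟩) →
      (∏ i, s i) ∈ M → ∀ i, s i ∈ M) :=
  stmt_6_general hfact M
end

section
/- Let H be a factorial commutative cancellative monoid and M a submonoid of H containing every unit of H. Then the following are equivalent: (i) for every a ∈ H and every square-free b ∈ H, a²·b ∈ M implies a ∈ M and a·b ∈ M; (v) for every a ∈ H and every square-free b ∈ H such that a divides bⁿ for some n ≥ 1, a·b ∈ M implies a ∈ M and b ∈ M. -/
/-!
Factoring into primes identifies `H` modulo units with the free commutative monoid of multisets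
of primes, and `M`, which is closed under associates, with an additive submonoid `S` of it. Both
conditions turn out to say that `S` is closed under `m ↦ rad m` and `m ↦ m / rad m`
(`m.dedup` and `m - m.dedup`). For (v) this is immediate with `b = rad m`, `a = m / rad m`.
From (i) it follows by induction on `|m|`: write `m = a² b` with `b` square-free, so `a`, `ab ∈ S`
and `rad (ab) = rad m`, `m / rad m = a · (ab / rad (ab))`. Conversely, if `m = a² b ∈ S` then
`m / rad m = a'² b'` with `a = a' b'` and `ab = a' · rad m`, so induction gives `a, ab ∈ S`.
-/

namespace Multiset

variable {α : Type*}

theorem nodup_iff_forall_two_nsmul_le {m : Multiset α} : m.Nodup ↔ ∀ v, 2 • v ≤ m → v = 0 := by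
  classical
  refine ⟨fun hm v hv => ?_, fun h => nodup_iff_count_le_one.2 fun a => ?_⟩
  · ext a
    have := (le_iff_count.1 hv a).trans (nodup_iff_count_le_one.1 hm a)
    rw [count_nsmul] at this
    rw [count_zero]; omega
  · by_contra! ha
    have : 2 • {a} ≤ m := by rw [nsmul_singleton, ← le_count_iff_replicate_le]; omega
    exact singleton_ne_zero a (h _ this)

variable [DecidableEq α]

theorem count_dedup_eq_min (m : Multiset α) (a : α) : m.dedup.count a = min (m.count a) 1 := by
  by_cases h : a ∈ m
  · rw [count_dedup, if_pos h]; have := count_pos.2 h; omega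
  · rw [count_dedup, if_neg h, count_eq_zero.2 h]; rfl

theorem exists_count_eq_comp (m : Multiset α) (g : ℕ → ℕ) (hg : g 0 = 0) :
    ∃ v : Multiset α, ∀ a, v.count a = g (m.count a) :=
  ⟨(m.toFinsupp.mapRange g hg).toMultiset, fun a => by simp⟩

theorem exists_two_nsmul_add_eq (m : Multiset α) : ∃ v w : Multiset α, w.Nodup ∧ 2 • v + w = m := by
  obtain ⟨v, hv⟩ := m.exists_count_eq_comp (· / 2) rfl
  obtain ⟨w, hw⟩ := m.exists_count_eq_comp (· % 2) rfl
  refine ⟨v, w, nodup_iff_count_le_one.2 fun a => ?_, ext.2 fun a => ?_⟩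
  · rw [hw]; omega
  · rw [count_add, count_nsmul, hv, hw]; omega

theorem card_sub_dedup_lt {m : Multiset α} (hm : m ≠ 0) : card (m - m.dedup) < card m := by
  rw [card_sub (dedup_le m)]
  have := card_pos.2 (mt dedup_eq_zero.1 hm)
  have := card_le_card (dedup_le m)
  omega

end Multiset

namespace AddSubmonoid

open Multiset

variable {α : Type*} (S : AddSubmonoid (Multiset α))

def SquareSplit : Prop :=
  ∀ v w : Multiset α, w.Nodup → 2 • v + w ∈ S → v ∈ S ∧ v + w ∈ S

def RadicalSplit : Prop :=
  ∀ v w : Multiset α, w.Nodup → (∃ n : ℕ, 1 ≤ n ∧ v ≤ n • w) → v + w ∈ S → v ∈ S ∧ w ∈ S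

def DedupClosed [DecidableEq α] : Prop :=
  ∀ m ∈ S, m.dedup ∈ S ∧ m - m.dedup ∈ S

variable {S}

section Dedup

variable [DecidableEq α]

theorem radicalSplit_iff_dedupClosed : S.RadicalSplit ↔ S.DedupClosed := by
  refine ⟨fun h m hm => ?_, fun h v w hw ⟨n, hn, hvw⟩ hm => ?_⟩
  · have hle : m - m.dedup ≤ (card m + 1) • m.dedup := le_iff_count.2 fun a => by
      have := count_le_card a m
      rw [count_sub, count_nsmul, count_dedup_eq_min]
      rcases (count a m).eq_zero_or_pos with h0 | h0
      · simp [h0]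
      · rw [min_eq_right h0, mul_one]; omega
    have hm' : m - m.dedup + m.dedup = m := tsub_add_cancel_of_le (dedup_le m)
    exact (h _ _ (nodup_dedup m) ⟨_, Nat.le_add_left 1 _, hle⟩ (hm'.symm ▸ hm)).symm
  · have hded : (v + w).dedup = w := Multiset.ext.2 fun a => by
      have hle := le_iff_count.1 hvw a
      rw [count_nsmul] at hle
      rw [count_dedup_eq_min, count_add]
      rcases Nat.le_one_iff_eq_zero_or_eq_one.1 (nodup_iff_count_le_one.1 hw a) with h1 | h1 <;>
        rw [h1] at hle ⊢ <;> omega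
    have hsub : v + w - (v + w).dedup = v := by rw [hded, add_tsub_cancel_right]
    obtain ⟨h1, h2⟩ := h _ hm
    rw [hded] at h1
    rw [hsub] at h2
    exact ⟨h2, h1⟩

theorem SquareSplit.dedupClosed (h : S.SquareSplit) : S.DedupClosed := by
  intro m
  induction hn : card m using Nat.strong_induction_on generalizing m with
  | _ n ih =>
  intro hm
  obtain ⟨v, w, hw, rfl⟩ := exists_two_nsmul_add_eq m
  obtain ⟨hv, hvw⟩ := h v w hw hm
  rcases eq_or_ne v 0 with rfl | hv0
  · simpa [hw.dedup] using hm
  have hlt : card (v + w) < n := by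
    rw [← hn, card_add, card_add, card_nsmul]
    have := card_pos.2 hv0
    omega
  obtain ⟨hded, hsub⟩ := ih _ hlt _ rfl hvw
  have e1 : (2 • v + w).dedup = (v + w).dedup := Multiset.ext.2 fun a => by
    simp only [count_dedup_eq_min, count_add, count_nsmul]; omega
  have e2 : 2 • v + w - (2 • v + w).dedup = v + (v + w - (v + w).dedup) :=
    Multiset.ext.2 fun a => by
      simp only [count_dedup_eq_min, count_add, count_nsmul, count_sub]; omega
  rw [e2, e1]
  exact ⟨hded, S.add_mem hv hsub⟩

theorem DedupClosed.squareSplit (h : S.DedupClosed) : S.SquareSplit := by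
  intro v w
  induction hn : card (2 • v + w) using Nat.strong_induction_on generalizing v w with
  | _ n ih =>
  intro hw hm
  rcases eq_or_ne (2 • v + w) 0 with h0 | h0
  · obtain ⟨hv, rfl⟩ := add_eq_zero.1 h0
    obtain rfl : v = 0 := by simpa using hv
    simp
  obtain ⟨hded, hsub⟩ := h _ hm
  -- `w'` collects the primes of `v` outside `w`: they drop to odd exponent in `m - m.dedup`.
  have hwc := nodup_iff_count_le_one.1 hw
  set w' := v.dedup - w
  have e1 : 2 • v + w - (2 • v + w).dedup = 2 • (v - w') + w' := Multiset.ext.2 fun a => by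
    have := hwc a
    simp only [w', count_dedup_eq_min, count_add, count_nsmul, count_sub]; omega
  have e2 : v - w' + w' = v := Multiset.ext.2 fun a => by
    simp only [w', count_dedup_eq_min, count_add, count_sub]; omega
  have e3 : v - w' + (2 • v + w).dedup = v + w := Multiset.ext.2 fun a => by
    have := hwc a
    simp only [w', count_dedup_eq_min, count_add, count_nsmul, count_sub]; omega
  have hlt : card (2 • (v - w') + w') < n := hn ▸ e1 ▸ card_sub_dedup_lt h0
  have hw' : w'.Nodup := nodup_of_le tsub_le_self (nodup_dedup v)
  obtain ⟨hv', hvw'⟩ := ih _ hlt _ _ rfl hw' (e1 ▸ hsub)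
  exact ⟨e2 ▸ hvw', e3 ▸ S.add_mem hv' hded⟩

end Dedup

theorem squareSplit_iff_radicalSplit : S.SquareSplit ↔ S.RadicalSplit := by
  classical
  rw [radicalSplit_iff_dedupClosed]
  exact ⟨SquareSplit.dedupClosed, DedupClosed.squareSplit⟩

end AddSubmonoid

namespace WithZero

variable {H : Type*} [CancelCommMonoid H]

instance : IsCancelMulZero (WithZero H) :=
  have : IsLeftCancelMulZero (WithZero H) := ⟨fun {a} ha b c h => by
    induction a with
    | zero => exact absurd rfl ha
    | coe a =>
      induction b <;> induction c <;> simp_all [← coe_mul]⟩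
  IsLeftCancelMulZero.to_isCancelMulZero

theorem coe_dvd_coe {x y : H} : (x : WithZero H) ∣ y ↔ x ∣ y := by
  refine ⟨fun ⟨c, hc⟩ => ?_, map_dvd coeMonoidHom⟩
  induction c with
  | zero => exact absurd hc coe_ne_zero
  | coe c => exact ⟨c, coe_inj.1 hc⟩

theorem isUnit_coe {x : H} : IsUnit (x : WithZero H) ↔ IsUnit x := by
  refine ⟨fun h => ?_, IsUnit.map coeMonoidHom⟩
  obtain ⟨c, hc⟩ := isUnit_iff_dvd_one.1 h
  induction c with
  | zero => exact absurd hc.symm (by simp)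
  | coe c => exact IsUnit.of_mul_eq_one c (coe_inj.1 hc).symm

theorem associated_coe {x y : H} : Associated (x : WithZero H) y ↔ Associated x y := by
  refine ⟨fun ⟨u, hu⟩ => ?_, Associated.map coeMonoidHom⟩
  induction hc : (u : WithZero H) with
  | zero => exact absurd hc u.ne_zero
  | coe c =>
    rw [hc, ← coe_mul, coe_inj] at hu
    exact ⟨(isUnit_coe.1 (hc ▸ u.isUnit)).unit, hu⟩

theorem prime_coe {p : H} (hp : ¬IsUnit p) (h : ∀ b c : H, p ∣ b * c → p ∣ b ∨ p ∣ c) :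
    Prime (p : WithZero H) := by
  refine ⟨coe_ne_zero, mt isUnit_coe.1 hp, fun b c hbc => ?_⟩
  induction b with
  | zero => exact .inl (dvd_zero _)
  | coe b =>
    induction c with
    | zero => exact .inr (dvd_zero _)
    | coe c => simpa only [coe_dvd_coe] using h b c (coe_dvd_coe.1 hbc)

theorem uniqueFactorizationMonoid
    (hfact : ∀ a : H, IsUnit a ∨ ∃ l : Multiset H,
      (∀ p ∈ l, ¬IsUnit p ∧ ∀ b c : H, p ∣ b * c → p ∣ b ∨ p ∣ c) ∧ l.prod = a) :
    UniqueFactorizationMonoid (WithZero H) := by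
  refine .of_exists_prime_factors fun a ha => ?_
  obtain ⟨x, rfl⟩ := ne_zero_iff_exists.1 ha
  rcases hfact x with hx | ⟨l, hl, rfl⟩
  · exact ⟨0, by simp, by simpa using (associated_one_iff_isUnit.2 (isUnit_coe.2 hx)).symm⟩
  · refine ⟨l.map coeMonoidHom, fun q hq => ?_, .of_eq (map_multiset_prod coeMonoidHom l).symm⟩
    obtain ⟨p, hp, rfl⟩ := Multiset.mem_map.1 hq
    exact prime_coe (hl p hp).1 (hl p hp).2

end WithZero

section Factorization

open Associates

variable {H : Type*} [CancelCommMonoid H] [UniqueFactorizationMonoid (WithZero H)]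

-- Mathlib's factorization theory lives in monoids with zero, so `H` is factored in `WithZero H`.
noncomputable def factorMultiset (x : H) :
    Multiset {p : Associates (WithZero H) // Irreducible p} :=
  factors' (x : WithZero H)

theorem factors_mk_coe (x : H) : (Associates.mk (x : WithZero H)).factors = factorMultiset x :=
  factors_mk _ WithZero.coe_ne_zero

theorem factorMultiset_one : factorMultiset (1 : H) = 0 := by
  apply WithTop.coe_injective
  rw [← factors_mk_coe, WithZero.coe_one, mk_one, factors_one]
  rfl

theorem factorMultiset_mul (x y : H) :
    factorMultiset (x * y) = factorMultiset x + factorMultiset y := by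
  apply WithTop.coe_injective
  rw [← factors_mk_coe, WithZero.coe_mul, ← mk_mul_mk, factors_mul, factors_mk_coe, factors_mk_coe]
  rfl

theorem factorMultiset_pow (x : H) (n : ℕ) : factorMultiset (x ^ n) = n • factorMultiset x := by
  induction n with
  | zero => rw [pow_zero, zero_nsmul, factorMultiset_one]
  | succ n ih => rw [pow_succ, succ_nsmul, factorMultiset_mul, ih]

theorem factorMultiset_le_iff_dvd {x y : H} : factorMultiset x ≤ factorMultiset y ↔ x ∣ y := by
  rw [← WithTop.coe_le_coe, ← factors_mk_coe, ← factors_mk_coe, factors_le, mk_le_mk_iff_dvd,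
    WithZero.coe_dvd_coe]

theorem factorMultiset_eq_iff {x y : H} : factorMultiset x = factorMultiset y ↔ Associated x y := by
  rw [← WithTop.coe_inj, ← factors_mk_coe, ← factors_mk_coe, ← WithZero.associated_coe,
    ← mk_eq_mk_iff_associated]
  exact ⟨eq_of_factors_eq_factors, congrArg _⟩

theorem factorMultiset_eq_zero_iff {x : H} : factorMultiset x = 0 ↔ IsUnit x := by
  rw [← factorMultiset_one, factorMultiset_eq_iff, associated_one_iff_isUnit]

theorem factorMultiset_surjective : Function.Surjective (factorMultiset (H := H)) := by
  intro s
  obtain ⟨a, ha⟩ := Associates.mk_surjective (FactorSet.prod (s : FactorSet (WithZero H)))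
  have ha0 : a ≠ 0 := by
    rintro rfl
    rw [mk_zero, eq_comm, FactorSet.prod_eq_zero_iff] at ha
    exact WithTop.coe_ne_top ha
  obtain ⟨x, rfl⟩ := (WithZero.ne_zero_iff_exists (x := a)).1 ha0
  exact ⟨x, WithTop.coe_injective (by rw [← factors_mk_coe, ha, prod_factors])⟩

theorem squarefree_iff_nodup_factorMultiset {x : H} : Squarefree x ↔ (factorMultiset x).Nodup := by
  rw [Multiset.nodup_iff_forall_two_nsmul_le, factorMultiset_surjective.forall]
  simp only [Squarefree, two_nsmul, ← factorMultiset_mul, factorMultiset_le_iff_dvd,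
    factorMultiset_eq_zero_iff]

def factorSubmonoid (M : Submonoid H) :
    AddSubmonoid (Multiset {p : Associates (WithZero H) // Irreducible p}) where
  carrier := factorMultiset '' M
  add_mem' := by
    rintro _ _ ⟨x, hx, rfl⟩ ⟨y, hy, rfl⟩
    exact ⟨x * y, M.mul_mem hx hy, factorMultiset_mul x y⟩
  zero_mem' := ⟨1, M.one_mem, factorMultiset_one⟩

variable {M : Submonoid H} (hunits : ∀ u : H, IsUnit u → u ∈ M)
include hunits

theorem factorMultiset_mem_factorSubmonoid_iff {x : H} :
    factorMultiset x ∈ factorSubmonoid M ↔ x ∈ M := by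
  refine ⟨fun ⟨y, hy, hyx⟩ => ?_, fun hx => ⟨x, hx, rfl⟩⟩
  obtain ⟨u, rfl⟩ := factorMultiset_eq_iff.1 hyx
  exact M.mul_mem hy (hunits _ u.isUnit)

theorem squareSplit_factorSubmonoid_iff : (factorSubmonoid M).SquareSplit ↔
    ∀ a b : H, Squarefree b → a ^ 2 * b ∈ M → a ∈ M ∧ a * b ∈ M := by
  rw [AddSubmonoid.SquareSplit, factorMultiset_surjective.forall₂]
  simp only [squarefree_iff_nodup_factorMultiset, ← factorMultiset_mem_factorSubmonoid_iff hunits,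
    factorMultiset_mul, factorMultiset_pow]

theorem radicalSplit_factorSubmonoid_iff : (factorSubmonoid M).RadicalSplit ↔
    ∀ a b : H, Squarefree b → (∃ n : ℕ, 1 ≤ n ∧ a ∣ b ^ n) → a * b ∈ M → a ∈ M ∧ b ∈ M := by
  rw [AddSubmonoid.RadicalSplit, factorMultiset_surjective.forall₂]
  simp only [squarefree_iff_nodup_factorMultiset, ← factorMultiset_mem_factorSubmonoid_iff hunits,
    factorMultiset_mul, ← factorMultiset_le_iff_dvd, factorMultiset_pow]

end Factorization

theorem stmt_7 {H : Type*} [CancelCommMonoid H]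
    (hfact : ∀ a : H, IsUnit a ∨ ∃ l : Multiset H, (∀ p ∈ l, ¬ IsUnit p ∧ ∀ b c : H, p ∣ b * c → p ∣ b ∨ p ∣ c) ∧ l.prod = a)
    (M : Submonoid H) (hunits : ∀ u : H, IsUnit u → u ∈ M) :
    (∀ a b : H, Squarefree b → a ^ 2 * b ∈ M → a ∈ M ∧ a * b ∈ M) ↔
    (∀ a b : H, Squarefree b → (∃ n : ℕ, 1 ≤ n ∧ a ∣ b ^ n) →
      a * b ∈ M → a ∈ M ∧ b ∈ M) := by
  have := WithZero.uniqueFactorizationMonoid hfact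
  rw [← squareSplit_factorSubmonoid_iff hunits, ← radicalSplit_factorSubmonoid_iff hunits]
  exact AddSubmonoid.squareSplit_iff_radicalSplit
end

section
/- Let H be a factorial commutative cancellative monoid and M a submonoid of H containing every unit of H. Then the following are equivalent: (i) for every a ∈ H and every square-free b ∈ H, a²·b ∈ M implies a ∈ M and a·b ∈ M; (iii) for every n ≥ 1 and square-free elements s₁,…,sₙ ∈ H that are pairwise relatively prime in H, if s₁·s₂²·s₃³·⋯·sₙⁿ ∈ M then for every k = 1,…,n the tail product sₖ·sₖ₊₁·⋯·sₙ belongs to M. -/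
/-!
(i) ⇒ (iii). Let `f i` be pairwise relatively prime square-free elements. Applying (i) to
`a = ∏ f i ^ (e i / 2)` and `b = ∏ f i ^ (e i % 2)` (square-free, as a product of coprime
square-free elements) shows that `∏ f i ^ e i ∈ M` implies the same for the exponents `⌊e i / 2⌋`
and `⌈e i / 2⌉`. Iterating `m` times gives all exponents `⌊(e i + c) / 2 ^ m⌋` with `c < 2 ^ m`,
and for `c = 2 ^ m - k` with `2 ^ m` large these are the indicators of `k ≤ e i`: the tail products.

(iii) ⇒ (i). Factor `a ^ 2 * b` as `∏ p ^ e p` over pairwise non-associated primes; grouping the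
primes by exponent, (iii) puts every `T k = ∏_{k ≤ e p} p` in `M`. The decomposition of an element
as a square times a square-free element is unique up to units, so `a ≈ ∏ p ^ ⌊e p / 2⌋ = ∏ T (2j)`
and `a * b ≈ ∏ p ^ ⌈e p / 2⌉ = ∏ T (2j + 1)`.
-/
open Finset
open scoped Function

section CancelCommMonoid

variable {H : Type*} [CancelCommMonoid H]

theorem dvd_of_mul_dvd_mul_left_cancel {a b c : H} (h : a * b ∣ a * c) : b ∣ c := by
  obtain ⟨d, hd⟩ := h
  exact ⟨d, mul_left_cancel (hd.trans (mul_assoc a b d))⟩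

theorem isUnit_of_mul_dvd_right {a b : H} (h : a * b ∣ b) : IsUnit a := by
  obtain ⟨d, hd⟩ := h
  refine IsUnit.of_mul_eq_one d (mul_left_cancel (a := b) ?_)
  calc b * (a * d) = a * b * d := by rw [mul_comm a b, mul_assoc]
    _ = b * 1 := by rw [← hd, mul_one]

theorem Associated.of_mul_left_cancel {a b c : H} (h : Associated (a * b) (a * c)) :
    Associated b c := by
  obtain ⟨u, hu⟩ := h
  exact ⟨u, mul_left_cancel (by rw [← hu, mul_assoc])⟩

variable [DecompositionMonoid H]

theorem Squarefree.dvd_of_dvd_mul_self {a c : H} (ha : Squarefree a) (h : a ∣ c * c) : a ∣ c := by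
  obtain ⟨a₁, a₂, h₁, h₂, rfl⟩ := exists_dvd_and_dvd_of_dvd_mul h
  exact (IsRelPrime.of_squarefree_mul ha).mul_dvd h₁ h₂

theorem squarefree_mul_of_isRelPrime {x y : H} (hxy : IsRelPrime x y) (hx : Squarefree x)
    (hy : Squarefree y) : Squarefree (x * y) := by
  intro c hc
  obtain ⟨a, b, ha, hb, hab⟩ := exists_dvd_and_dvd_of_dvd_mul hc
  have hac : a ∣ c := (hx.squarefree_of_dvd ha).dvd_of_dvd_mul_self (hab ▸ dvd_mul_right a b)
  have hbc : b ∣ c := (hy.squarefree_of_dvd hb).dvd_of_dvd_mul_self (hab ▸ dvd_mul_left b a)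
  exact isUnit_of_mul_dvd_right (hab ▸ ((hxy.of_dvd_left ha).of_dvd_right hb).mul_dvd hac hbc)

theorem squarefree_prod_of_pairwise_isRelPrime {ι : Type*} {s : Finset ι} {f : ι → H}
    (hs : Set.Pairwise s (IsRelPrime on f)) (hs' : ∀ i ∈ s, Squarefree (f i)) :
    Squarefree (∏ i ∈ s, f i) := by
  induction s using cons_induction with
  | empty => simp
  | cons a s ha ih =>
    rw [prod_cons]
    rw [coe_cons, Set.pairwise_insert] at hs
    refine squarefree_mul_of_isRelPrime (.prod_right fun i hi ↦ ?_) (hs' a (by simp)) ?_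
    · exact (hs.right i (by simp [hi]) fun h ↦ ha (h ▸ hi)).left
    · exact ih hs.left fun i hi ↦ hs' i <| mem_cons_of_mem hi

end CancelCommMonoid

/-- Mathlib's `Prime` lives in monoids with zero; this is the same notion in an arbitrary monoid. -/
def IsMonoidPrime {H : Type*} [CommMonoid H] (p : H) : Prop :=
  ¬IsUnit p ∧ ∀ b c : H, p ∣ b * c → p ∣ b ∨ p ∣ c

def IsFactorialMonoid (H : Type*) [CommMonoid H] : Prop :=
  ∀ a : H, IsUnit a ∨ ∃ l : Multiset H, (∀ p ∈ l, IsMonoidPrime p) ∧ l.prod = a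

namespace IsMonoidPrime

variable {H : Type*} [CancelCommMonoid H] {p q c d x : H}

theorem isRelPrime_of_not_dvd (hp : IsMonoidPrime p) (hpx : ¬p ∣ x) : IsRelPrime p x := by
  rintro d ⟨t, rfl⟩ hdx
  rcases hp.2 d t dvd_rfl with h | h
  · exact absurd (h.trans hdx) hpx
  · exact isUnit_of_mul_dvd_right h

theorem associated_of_dvd (hp : IsMonoidPrime p) (hq : IsMonoidPrime q) (h : q ∣ p) :
    Associated q p := by
  obtain ⟨t, rfl⟩ := h
  rcases hp.2 q t dvd_rfl with h | h
  · exact associated_mul_unit_right q t (isUnit_of_mul_dvd_right (mul_comm q t ▸ h))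
  · exact absurd (isUnit_of_mul_dvd_right h) hq.1

theorem squarefree (hp : IsMonoidPrime p) : Squarefree p := by
  rintro c ⟨t, rfl⟩
  rw [mul_assoc] at hp
  rcases hp.2 c (c * t) dvd_rfl with h | h
  · exact isUnit_of_mul_isUnit_left (isUnit_of_mul_dvd_right (mul_comm c (c * t) ▸ h))
  · exact isUnit_of_mul_dvd_right h

theorem dvd_of_mul_self_dvd_sq_mul [DecompositionMonoid H] (hp : IsMonoidPrime p)
    (hd : Squarefree d) (h : p * p ∣ c ^ 2 * d) : p ∣ c := by
  by_contra hpc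
  have hpc2 : IsRelPrime p (c ^ 2) :=
    hp.isRelPrime_of_not_dvd fun h2 ↦ hpc ((hp.2 c c (sq c ▸ h2)).elim id id)
  exact hp.1 (hd p ((hpc2.mul_left hpc2).dvd_of_dvd_mul_left h))

end IsMonoidPrime

namespace IsFactorialMonoid

variable {H : Type*} [CancelCommMonoid H]

@[elab_as_elim]
theorem induction_on (hH : IsFactorialMonoid H) {P : H → Prop} (a : H)
    (unit : ∀ u, IsUnit u → P u) (mul : ∀ p a, IsMonoidPrime p → P a → P (p * a)) : P a := by
  rcases hH a with ha | ⟨l, hl, rfl⟩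
  · exact unit a ha
  induction l using Multiset.induction with
  | empty => exact unit 1 isUnit_one
  | cons p l ih =>
    rw [Multiset.prod_cons]
    exact mul p _ (hl p (Multiset.mem_cons_self p l))
      (ih fun q hq ↦ hl q (Multiset.mem_cons_of_mem hq))

theorem decompositionMonoid (hH : IsFactorialMonoid H) : DecompositionMonoid H := by
  refine ⟨fun a ↦ hH.induction_on a
    (fun u hu b c _ ↦ ⟨u, 1, hu.dvd, one_dvd c, (mul_one u).symm⟩) ?_⟩
  intro p a hp ha b c hpa
  rcases hp.2 b c ((dvd_mul_right p a).trans hpa) with ⟨b', rfl⟩ | ⟨c', rfl⟩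
  · obtain ⟨a₁, a₂, h₁, h₂, rfl⟩ :=
      ha (dvd_of_mul_dvd_mul_left_cancel (a := p) (by rwa [mul_assoc] at hpa))
    exact ⟨p * a₁, a₂, mul_dvd_mul_left p h₁, h₂, (mul_assoc p a₁ a₂).symm⟩
  · obtain ⟨a₁, a₂, h₁, h₂, rfl⟩ :=
      ha (dvd_of_mul_dvd_mul_left_cancel (a := p) (by rwa [mul_left_comm b p c'] at hpa))
    exact ⟨a₁, p * a₂, h₁, mul_dvd_mul_left p h₂, mul_left_comm p a₁ a₂⟩

theorem exists_associated_prod_pow (hH : IsFactorialMonoid H) (x : H) :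
    ∃ (P : Finset H) (e : H → ℕ), (∀ p ∈ P, IsMonoidPrime p) ∧ (P : Set H).Pairwise IsRelPrime ∧
      Associated x (∏ p ∈ P, p ^ e p) := by
  classical
  refine hH.induction_on x (fun u hu ↦ ⟨∅, 0, by simp, by simp, by simpa⟩) ?_
  rintro q x hq ⟨P, e, hP, hrel, hx⟩
  by_cases hqP : ∃ p ∈ P, q ∣ p
  · obtain ⟨p, hp, hqp⟩ := hqP
    refine ⟨P, e + Pi.single p 1, hP, hrel, ?_⟩
    have hsingle : ∏ p' ∈ P, p' ^ (Pi.single p 1 : H → ℕ) p' = p := by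
      rw [prod_eq_single_of_mem p hp fun p' _ hp' ↦ by simp [hp']]
      simp
    simp_rw [Pi.add_apply, pow_add, prod_mul_distrib, hsingle, mul_comm _ p]
    exact ((hP p hp).associated_of_dvd hq hqp).mul_mul hx
  · push Not at hqP
    have hqP' : q ∉ P := fun h ↦ hqP q h dvd_rfl
    refine ⟨insert q P, Function.update e q 1, ?_, ?_, ?_⟩
    · exact forall_mem_insert _ _ _ |>.2 ⟨hq, hP⟩
    · rw [coe_insert, Set.pairwise_insert]
      exact ⟨hrel, fun p hp _ ↦ ⟨hq.isRelPrime_of_not_dvd (hqP p hp),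
        (hq.isRelPrime_of_not_dvd (hqP p hp)).symm⟩⟩
    · rw [prod_insert hqP', Function.update_self, pow_one]
      refine hx.mul_left q |>.trans (Associated.of_eq ?_)
      congr 1
      exact prod_congr rfl fun p hp ↦ by rw [Function.update_of_ne (ne_of_mem_of_not_mem hp hqP')]

theorem associated_of_sq_mul_associated (hH : IsFactorialMonoid H) {a b c d : H}
    (hb : Squarefree b) (hd : Squarefree d) (h : Associated (a ^ 2 * b) (c ^ 2 * d)) :
    Associated a c ∧ Associated b d := by
  have := hH.decompositionMonoid
  induction a using hH.induction_on generalizing c with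
  | unit u hu =>
    have hbd : Associated b (c ^ 2 * d) := (associated_isUnit_mul_left_iff (hu.pow 2)).1 h
    have hc : IsUnit c := hb c (hbd.dvd_iff_dvd_right.2 (sq c ▸ dvd_mul_right _ _))
    exact ⟨(associated_one_iff_isUnit.2 hu).trans (associated_one_iff_isUnit.2 hc).symm,
      hbd.trans ((associated_isUnit_mul_left_iff (hc.pow 2)).2 (Associated.refl d))⟩
  | mul p a hp ih =>
    obtain ⟨c', rfl⟩ := hp.dvd_of_mul_self_dvd_sq_mul hd
      (h.dvd_iff_dvd_right.1 ⟨a ^ 2 * b, by rw [mul_pow, sq p, mul_assoc]⟩)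
    have h' : Associated (a ^ 2 * b) (c' ^ 2 * d) :=
      Associated.of_mul_left_cancel (a := p ^ 2) (by simpa only [mul_pow, mul_assoc] using h)
    exact ⟨(ih h').1.mul_left p, (ih h').2⟩

end IsFactorialMonoid

section Tails

variable {ι H : Type*}

theorem Finset.prod_pow_ite_eq_prod_filter [CommMonoid H] (s : Finset ι) (p : ι → Prop)
    [DecidablePred p] (f : ι → H) :
    ∏ i ∈ s, f i ^ (if p i then 1 else 0) = ∏ i ∈ s with p i, f i := by
  rw [prod_filter]
  exact prod_congr rfl fun i _ ↦ by split_ifs <;> simp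

theorem Finset.prod_prod_filter_le_eq_prod_pow_card [CommMonoid H] (s : Finset ι) (f : ι → H)
    (e : ι → ℕ) (K : Finset ℕ) (g : ℕ → ℕ) :
    ∏ j ∈ K, ∏ i ∈ s with g j ≤ e i, f i = ∏ i ∈ s, f i ^ #{j ∈ K | g j ≤ e i} := by
  simp_rw [← prod_pow_ite_eq_prod_filter]
  rw [prod_comm]
  simp_rw [prod_pow_eq_pow_sum, card_filter]

theorem Finset.prod_fin_prod_filter_eq_succ_pow [CommMonoid H] (s : Finset ι) (f : ι → H)
    (e : ι → ℕ) {n : ℕ} (he : ∀ i ∈ s, e i ≤ n) (φ : ℕ → ℕ) (hφ : φ 0 = 0) :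
    ∏ j : Fin n, (∏ i ∈ s with e i = j + 1, f i) ^ φ (j + 1) = ∏ i ∈ s, f i ^ φ (e i) :=
  calc ∏ j : Fin n, (∏ i ∈ s with e i = j + 1, f i) ^ φ (j + 1)
      = ∏ t ∈ range (n + 1), (∏ i ∈ s with e i = t, f i) ^ φ t := by
        rw [Fin.prod_univ_eq_prod_range (fun j ↦ (∏ i ∈ s with e i = j + 1, f i) ^ φ (j + 1)),
          prod_range_succ' _ n, hφ, pow_zero, mul_one]
    _ = ∏ t ∈ range (n + 1), ∏ i ∈ s with e i = t, f i ^ φ (e i) :=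
        prod_congr rfl fun t _ ↦ by
          rw [← prod_pow]
          exact prod_congr rfl fun i hi ↦ by rw [(mem_filter.1 hi).2]
    _ = ∏ i ∈ s, f i ^ φ (e i) :=
        prod_fiberwise_of_maps_to (fun i hi ↦ mem_range.2 (Nat.lt_succ_of_le (he i hi))) _

theorem sq_prod_pow_div_two_mul_prod_pow_mod_two [CommMonoid H] (s : Finset ι) (f : ι → H)
    (e : ι → ℕ) :
    (∏ i ∈ s, f i ^ (e i / 2)) ^ 2 * ∏ i ∈ s, f i ^ (e i % 2) = ∏ i ∈ s, f i ^ e i := by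
  rw [← prod_pow, ← prod_mul_distrib]
  exact prod_congr rfl fun i _ ↦ by rw [← pow_mul, ← pow_add, Nat.div_add_mod' (e i) 2]

theorem Submonoid.mem_of_associated [CommMonoid H] {M : Submonoid H}
    (hunits : ∀ u : H, IsUnit u → u ∈ M) {x y : H} (hx : x ∈ M) (h : Associated x y) : y ∈ M := by
  obtain ⟨u, rfl⟩ := h
  exact M.mul_mem hx (hunits u u.isUnit)

variable [CancelCommMonoid H] [DecompositionMonoid H] {s : Finset ι} {f : ι → H}

theorem squarefree_prod_pow_mod_two (hsq : ∀ i ∈ s, Squarefree (f i))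
    (hrel : (s : Set ι).Pairwise (IsRelPrime on f)) (e : ι → ℕ) :
    Squarefree (∏ i ∈ s, f i ^ (e i % 2)) := by
  refine squarefree_prod_of_pairwise_isRelPrime (fun i hi j hj hij ↦ ?_) fun i hi ↦ ?_
  · exact (hrel hi hj hij).pow_left.pow_right
  · rcases Nat.mod_two_eq_zero_or_one (e i) with h | h <;> simp [h, hsq i hi]

variable {M : Submonoid H}

theorem prod_pow_add_div_two_mem
    (hM : ∀ a b : H, Squarefree b → a ^ 2 * b ∈ M → a ∈ M ∧ a * b ∈ M)
    (hsq : ∀ i ∈ s, Squarefree (f i))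
    (hrel : (s : Set ι).Pairwise (IsRelPrime on f)) {e : ι → ℕ} (he : ∏ i ∈ s, f i ^ e i ∈ M)
    {d : ℕ} (hd : d ≤ 1) : ∏ i ∈ s, f i ^ ((e i + d) / 2) ∈ M := by
  obtain ⟨ha, hab⟩ := hM _ _ (squarefree_prod_pow_mod_two hsq hrel e)
    (by rwa [sq_prod_pow_div_two_mul_prod_pow_mod_two])
  interval_cases d
  · exact ha
  · rw [← prod_mul_distrib] at hab
    simp_rw [← pow_add] at hab
    convert hab using 3
    omega

theorem prod_pow_add_div_two_pow_mem
    (hM : ∀ a b : H, Squarefree b → a ^ 2 * b ∈ M → a ∈ M ∧ a * b ∈ M)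
    (hsq : ∀ i ∈ s, Squarefree (f i))
    (hrel : (s : Set ι).Pairwise (IsRelPrime on f)) {e : ι → ℕ} (he : ∏ i ∈ s, f i ^ e i ∈ M)
    (m : ℕ) {c : ℕ} (hc : c < 2 ^ m) : ∏ i ∈ s, f i ^ ((e i + c) / 2 ^ m) ∈ M := by
  induction m generalizing c with
  | zero => simpa [Nat.lt_one_iff.1 hc] using he
  | succ m ih =>
    have hpos : 0 < 2 ^ m := by positivity
    -- `c = c % 2 ^ m + 2 ^ m * d` with `d ≤ 1`: one more halving step, with `d` as its rounding
    have key : ∀ x, (x + c) / 2 ^ (m + 1) = ((x + c % 2 ^ m) / 2 ^ m + c / 2 ^ m) / 2 := by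
      intro x
      conv_lhs => rw [← Nat.mod_add_div c (2 ^ m), ← add_assoc]
      rw [pow_succ, ← Nat.div_div_eq_div_mul, Nat.add_mul_div_left _ _ hpos]
    simp_rw [key]
    exact prod_pow_add_div_two_mem hM hsq hrel (ih (Nat.mod_lt c hpos))
      (Nat.lt_succ_iff.1 (Nat.div_lt_of_lt_mul (by rwa [← pow_succ])))

theorem prod_filter_le_mem
    (hM : ∀ a b : H, Squarefree b → a ^ 2 * b ∈ M → a ∈ M ∧ a * b ∈ M)
    (hsq : ∀ i ∈ s, Squarefree (f i))
    (hrel : (s : Set ι).Pairwise (IsRelPrime on f)) {e : ι → ℕ} (he : ∏ i ∈ s, f i ^ e i ∈ M)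
    {k : ℕ} (hk : 0 < k) : ∏ i ∈ s with k ≤ e i, f i ∈ M := by
  set m := k + ∑ i ∈ s, e i
  have hem : ∀ i ∈ s, e i < 2 ^ m := fun i hi ↦
    ((single_le_sum (fun _ _ ↦ Nat.zero_le _) hi).trans (Nat.le_add_left _ k)).trans_lt
      Nat.lt_two_pow_self
  have hkm : k < 2 ^ m := (Nat.le_add_right k _).trans_lt Nat.lt_two_pow_self
  have hmem := prod_pow_add_div_two_pow_mem hM hsq hrel he m (c := 2 ^ m - k) (by omega)
  rw [← prod_pow_ite_eq_prod_filter]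
  convert hmem using 3 with i hi
  have := hem i hi
  generalize 2 ^ m = N at *
  split_ifs with h
  · exact (Nat.div_eq_of_lt_le (by omega) (by omega)).symm
  · exact (Nat.div_eq_of_lt (by omega)).symm

theorem prod_filter_le_mem_of_fin
    (h3 : ∀ n : ℕ, 1 ≤ n → ∀ s : Fin n → H, (∀ i, Squarefree (s i)) →
      (∀ i j, i ≠ j → IsRelPrime (s i) (s j)) → (∏ i, s i ^ (i.val + 1)) ∈ M →
      ∀ k : Fin n, (∏ i ∈ univ.filter (fun i ↦ k ≤ i), s i) ∈ M)
    (hsq : ∀ i ∈ s, Squarefree (f i))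
    (hrel : (s : Set ι).Pairwise (IsRelPrime on f)) {e : ι → ℕ} (he : ∏ i ∈ s, f i ^ e i ∈ M)
    {k : ℕ} (hk : 0 < k) : ∏ i ∈ s with k ≤ e i, f i ∈ M := by
  set n := k + s.sup e
  have hen : ∀ i ∈ s, e i ≤ n := fun i hi ↦ (le_sup hi).trans (Nat.le_add_left _ k)
  set σ : Fin n → H := fun j ↦ ∏ i ∈ s with e i = j + 1, f i
  have hσsq : ∀ j, Squarefree (σ j) := fun j ↦
    squarefree_prod_of_pairwise_isRelPrime (hrel.mono (coe_subset.2 (filter_subset _ _)))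
      fun i hi ↦ hsq i (mem_of_mem_filter i hi)
  have hσrel : ∀ j j', j ≠ j' → IsRelPrime (σ j) (σ j') := by
    refine fun j j' hjj' ↦ .prod_left fun i hi ↦ .prod_right fun i' hi' ↦ hrel
      (mem_of_mem_filter i hi) (mem_of_mem_filter i' hi') fun hii' ↦ hjj' (Fin.ext ?_)
    have := (mem_filter.1 hi).2
    have := (mem_filter.1 hi').2
    subst hii'
    omega
  have hσprod : ∏ j, σ j ^ (j.val + 1) = ∏ i ∈ s, f i ^ e i :=
    prod_fin_prod_filter_eq_succ_pow s f e hen id rfl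
  have hσ := h3 n (by omega) σ hσsq hσrel (hσprod ▸ he) ⟨k - 1, by omega⟩
  rw [← prod_pow_ite_eq_prod_filter, ← prod_fin_prod_filter_eq_succ_pow s f e hen
    (fun t ↦ if k ≤ t then 1 else 0) (if_neg (by omega))]
  rw [← prod_pow_ite_eq_prod_filter] at hσ
  convert hσ using 3 with j
  simp only [Fin.le_def]
  split_ifs <;> omega

end Tails

theorem IsFactorialMonoid.mem_and_mul_mem_of_sq_mul_mem {H : Type*} [CancelCommMonoid H]
    (hH : IsFactorialMonoid H) {M : Submonoid H} (hunits : ∀ u : H, IsUnit u → u ∈ M)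
    (htail : ∀ (P : Finset H) (e : H → ℕ), (∀ p ∈ P, Squarefree p) →
      (P : Set H).Pairwise IsRelPrime → ∏ p ∈ P, p ^ e p ∈ M →
      ∀ k, 0 < k → ∏ p ∈ P with k ≤ e p, p ∈ M)
    {a b : H} (hb : Squarefree b) (hab : a ^ 2 * b ∈ M) : a ∈ M ∧ a * b ∈ M := by
  have := hH.decompositionMonoid
  obtain ⟨P, e, hprime, hrel, hx⟩ := hH.exists_associated_prod_pow (a ^ 2 * b)
  have hsq : ∀ p ∈ P, Squarefree p := fun p hp ↦ (hprime p hp).squarefree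
  have htails := htail P e hsq hrel (Submonoid.mem_of_associated hunits hab hx)
  obtain ⟨haA, hbB⟩ := hH.associated_of_sq_mul_associated hb
    (squarefree_prod_pow_mod_two (f := id) hsq hrel e)
    (hx.trans (.of_eq (sq_prod_pow_div_two_mul_prod_pow_mod_two P id e).symm))
  -- `⌊e/2⌋` and `⌈e/2⌉` count the even and the odd `k ≤ e`, respectively
  set N := ∑ p ∈ P, e p
  have hN : ∀ p ∈ P, e p ≤ N := fun p hp ↦ single_le_sum (fun _ _ ↦ Nat.zero_le _) hp
  have hcount : ∀ (r : ℕ), r ≤ 1 → ∏ p ∈ P, p ^ ((e p + r) / 2) ∈ M := by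
    intro r hr
    convert prod_mem fun j (_ : j ∈ range N) ↦ htails (2 * j + 2 - r) (by omega) using 1
    refine .trans ?_ (prod_prod_filter_le_eq_prod_pow_card P id e (range N) _).symm
    refine prod_congr rfl fun p hp ↦ ?_
    rw [show {j ∈ range N | 2 * j + 2 - r ≤ e p} = range ((e p + r) / 2) by
      ext j; have := hN p hp; simp only [mem_filter, mem_range]; omega, card_range]
    rfl
  constructor
  · exact Submonoid.mem_of_associated hunits (hcount 0 (by omega)) haA.symm
  · refine Submonoid.mem_of_associated hunits (hcount 1 le_rfl) (.symm ?_)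
    refine (haA.mul_mul hbB).trans (.of_eq ?_)
    rw [← prod_mul_distrib]
    exact prod_congr rfl fun p _ ↦ by rw [id, ← pow_add]; congr 1; omega

theorem stmt_8 {H : Type*} [CancelCommMonoid H]
    (hfact : ∀ a : H, IsUnit a ∨ ∃ l : Multiset H, (∀ p ∈ l, ¬ IsUnit p ∧ ∀ b c : H, p ∣ b * c → p ∣ b ∨ p ∣ c) ∧ l.prod = a)
    (M : Submonoid H) (hunits : ∀ u : H, IsUnit u → u ∈ M) :
    (∀ a b : H, Squarefree b → a ^ 2 * b ∈ M → a ∈ M ∧ a * b ∈ M) ↔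
    (∀ n : ℕ, 1 ≤ n → ∀ s : Fin n → H, (∀ i, Squarefree (s i)) →
      (∀ i j, i ≠ j → IsRelPrime (s i) (s j)) →
      (∏ i, (s i) ^ (i.val + 1)) ∈ M →
      ∀ k : Fin n, (∏ i ∈ Finset.univ.filter (fun i => k ≤ i), s i) ∈ M) := by
  have hH : IsFactorialMonoid H := hfact
  have := hH.decompositionMonoid
  constructor
  · intro hM n _ s hsq hrel hs k
    have htail := prod_filter_le_mem (M := M) (s := univ) (e := fun i ↦ i.val + 1) hM
      (fun i _ ↦ hsq i) (fun i _ j _ hij ↦ hrel i j hij) hs (k := k.val + 1) k.val.succ_pos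
    simpa only [Nat.add_le_add_iff_right, Fin.val_fin_le] using htail
  · intro h3 a b
    exact hH.mem_and_mul_mem_of_sq_mul_mem hunits
      fun P e hsq hrel he k hk ↦ prod_filter_le_mem_of_fin (M := M) h3 (f := id) hsq hrel he hk
end

section
/- Let H be a commutative cancellative monoid, and let r₁,…,rₙ and t₁,…,tₙ be radical elements of H with rᵢ dividing rᵢ₊₁ and tᵢ dividing tᵢ₊₁ for i = 1,…,n−1. If the products r₁·r₂·⋯·rₙ and t₁·t₂·⋯·tₙ are associated, then rᵢ is associated to tᵢ for every i = 1,…,n. -/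
/-!
Divisibility along each chain makes the product divide a power of its last member, so the last
members `rₙ` and `tₙ` each divide a power of the other: `rₙ ∣ ∏ r ~ ∏ t ∣ tₙ ^ n`. Radicality
turns this into `rₙ ∣ tₙ` and `tₙ ∣ rₙ`, hence `rₙ ~ tₙ`. Cancelling the last factor from both
products and inducting on `n` gives the remaining pairs.
-/

section CommMonoid

variable {M : Type*} [CommMonoid M]

theorem Finset.prod_dvd_pow_card {ι : Type*} {s : Finset ι} {f : ι → M} {a : M}
    (h : ∀ i ∈ s, f i ∣ a) : ∏ i ∈ s, f i ∣ a ^ s.card := by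
  simpa using Finset.prod_dvd_prod_of_dvd f (fun _ ↦ a) h

theorem Fin.dvd_of_le_of_forall_dvd_succ {n : ℕ} (r : Fin n → M)
    (hr : ∀ i : ℕ, ∀ h : i + 1 < n, r ⟨i, Nat.lt_of_succ_lt h⟩ ∣ r ⟨i + 1, h⟩)
    {i j : Fin n} (hij : i ≤ j) : r i ∣ r j := by
  cases n with
  | zero => exact i.elim0
  | succ n =>
    have hmono : Monotone (Associates.mk ∘ r) :=
      Fin.monotone_iff_le_succ.2 fun k ↦ Associates.mk_le_mk_of_dvd (hr k (Nat.succ_lt_succ k.2))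
    exact Associates.mk_le_mk_iff_dvd.1 (hmono hij)

theorem Fin.prod_dvd_last_pow {n : ℕ} (r : Fin (n + 1) → M)
    (hr : ∀ i : ℕ, ∀ h : i + 1 < n + 1, r ⟨i, Nat.lt_of_succ_lt h⟩ ∣ r ⟨i + 1, h⟩) :
    ∏ i, r i ∣ r (Fin.last n) ^ (n + 1) := by
  simpa using Finset.prod_dvd_pow_card (s := Finset.univ) fun i _ ↦
    Fin.dvd_of_le_of_forall_dvd_succ r hr (Fin.le_last i)

end CommMonoid

section CancelCommMonoid

variable {M : Type*} [CancelCommMonoid M]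

theorem associated_of_dvd_dvd_of_cancel {a b : M} (hab : a ∣ b) (hba : b ∣ a) : Associated a b := by
  obtain ⟨c, rfl⟩ := hab
  obtain ⟨d, hd⟩ := hba
  have hcd : c * d = 1 := mul_left_cancel (a := a) (by rw [← mul_assoc, ← hd, mul_one])
  exact ⟨Units.mkOfMulEqOne c d hcd, rfl⟩

theorem Associated.of_mul_right_of_cancel {a b c d : M} (h : Associated (a * b) (c * d))
    (hbd : Associated b d) : Associated a c := by
  obtain ⟨u, hu⟩ := h.trans (hbd.symm.mul_left c)
  exact ⟨u, mul_right_cancel (b := b) (by rw [← hu, mul_right_comm])⟩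

theorem associated_last_of_prod_associated {n : ℕ} (r t : Fin (n + 1) → M)
    (hr : IsRadical (r (Fin.last n))) (ht : IsRadical (t (Fin.last n)))
    (hrd : ∀ i : ℕ, ∀ h : i + 1 < n + 1, r ⟨i, Nat.lt_of_succ_lt h⟩ ∣ r ⟨i + 1, h⟩)
    (htd : ∀ i : ℕ, ∀ h : i + 1 < n + 1, t ⟨i, Nat.lt_of_succ_lt h⟩ ∣ t ⟨i + 1, h⟩)
    (h : Associated (∏ i, r i) (∏ i, t i)) :
    Associated (r (Fin.last n)) (t (Fin.last n)) :=
  associated_of_dvd_dvd_of_cancel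
    (hr _ _ <| (Finset.dvd_prod_of_mem r (Finset.mem_univ _)).trans <|
      h.dvd.trans (Fin.prod_dvd_last_pow t htd))
    (ht _ _ <| (Finset.dvd_prod_of_mem t (Finset.mem_univ _)).trans <|
      h.symm.dvd.trans (Fin.prod_dvd_last_pow r hrd))

end CancelCommMonoid

theorem stmt_15 {H : Type*} [CancelCommMonoid H] {n : ℕ}
    (r t : Fin n → H) (hr : ∀ i, IsRadical (r i)) (ht : ∀ i, IsRadical (t i))
    (hrd : ∀ i : ℕ, ∀ h : i + 1 < n, r ⟨i, Nat.lt_of_succ_lt h⟩ ∣ r ⟨i + 1, h⟩)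
    (htd : ∀ i : ℕ, ∀ h : i + 1 < n, t ⟨i, Nat.lt_of_succ_lt h⟩ ∣ t ⟨i + 1, h⟩)
    (hassoc : Associated (∏ i, r i) (∏ i, t i)) :
    ∀ i, Associated (r i) (t i) := by
  induction n with
  | zero => exact fun i ↦ i.elim0
  | succ n ih =>
    have hlast := associated_last_of_prod_associated r t (hr _) (ht _) hrd htd hassoc
    rw [Fin.prod_univ_castSucc, Fin.prod_univ_castSucc] at hassoc
    have hinit := ih (r ∘ Fin.castSucc) (t ∘ Fin.castSucc) (fun _ ↦ hr _) (fun _ ↦ ht _)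
      (fun i h ↦ hrd i (by omega)) (fun i h ↦ htd i (by omega))
      (hassoc.of_mul_right_of_cancel hlast)
    exact Fin.lastCases hlast hinit
end

section
/- Let H be a commutative cancellative GCD monoid, and let s₀,…,sₙ and t₀,…,tₙ be square-free elements of H. If s₀·s₁²·s₂^(2²)·⋯·sₙ^(2ⁿ) is associated to t₀·t₁²·t₂^(2²)·⋯·tₙ^(2ⁿ), then sᵢ is associated to tᵢ for every i = 0,…,n. -/
/-!
Adjoining a zero to `H` gives a GCD monoid in Mathlib's sense with the same squarefree elements
and the same association relation. There, if `s * x ^ 2 ~ t * y ^ 2` with `s`, `t` squarefree and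
`x ≠ 0`, cancelling `g ^ 2` for `g = gcd x y` leaves `s * x' ^ 2 ~ t * y' ^ 2` with `x'`, `y'`
coprime; then `x' ^ 2 ∣ t` and `y' ^ 2 ∣ s`, so `x'` and `y'` are units, whence `s ~ t` and
`x ~ y`. As `∏ sᵢ ^ 2 ^ i = s₀ * (∏ sᵢ₊₁ ^ 2 ^ i) ^ 2`, induction on `n` peels off one index at a
time.
-/

namespace WithZero

variable {M : Type*}

theorem coe_dvd_coe_s17 [Monoid M] {a b : M} : (a : WithZero M) ∣ b ↔ a ∣ b := by
  refine ⟨fun ⟨c, hc⟩ => ?_, fun ⟨c, hc⟩ => ⟨c, by rw [hc, coe_mul]⟩⟩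
  lift c to M using fun h => coe_ne_zero (by rwa [h, mul_zero] at hc)
  exact ⟨c, coe_inj.mp hc⟩

theorem isUnit_coe_s17 [CommMonoid M] {a : M} : IsUnit (a : WithZero M) ↔ IsUnit a := by
  rw [isUnit_iff_dvd_one, isUnit_iff_dvd_one, ← coe_one, coe_dvd_coe_s17]

theorem associated_coe_s17 [CommMonoid M] {a b : M} :
    Associated (a : WithZero M) b ↔ Associated a b := by
  refine ⟨fun ⟨u, hu⟩ => ?_, fun h => h.map coeMonoidHom⟩
  lift (u : WithZero M) to M using u.ne_zero with v hv
  refine ⟨(isUnit_coe_s17.mp (hv ▸ u.isUnit)).unit, coe_inj.mp ?_⟩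
  rwa [coe_mul, IsUnit.unit_spec]

theorem squarefree_coe [CommMonoid M] {a : M} :
    Squarefree (a : WithZero M) ↔ Squarefree a := by
  refine ⟨fun h e he => isUnit_coe_s17.mp (h e (by rwa [← coe_mul, coe_dvd_coe_s17])), fun h d hd => ?_⟩
  lift d to M using fun hd0 => coe_ne_zero (zero_dvd_iff.mp (by rwa [hd0, mul_zero] at hd))
  exact isUnit_coe_s17.mpr (h d (coe_dvd_coe_s17.mp hd))

instance [CancelCommMonoid M] : IsCancelMulZero (WithZero M) :=
  have : IsLeftCancelMulZero (WithZero M) := ⟨fun {a} ha b c h => by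
    lift a to M using ha
    induction b <;> induction c <;> simp_all [← coe_mul]⟩
  IsLeftCancelMulZero.to_isCancelMulZero

theorem isGCDMonoid_of_exists_gcd [CancelCommMonoid M]
    (h : ∀ a b : M, ∃ d : M, d ∣ a ∧ d ∣ b ∧ ∀ c : M, c ∣ a → c ∣ b → c ∣ d) :
    IsGCDMonoid (WithZero M) := by
  refine isGCDMonoid_iff_exists_gcd.mpr ⟨inferInstance, fun a b => ?_⟩
  induction a with
  | zero => exact ⟨b, by simp⟩
  | coe a =>
    induction b with
    | zero => exact ⟨a, by simp⟩
    | coe b =>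
      obtain ⟨d, hda, hdb, hd⟩ := h a b
      refine ⟨d, fun c => ?_⟩
      induction c with
      | zero => simp
      | coe c =>
        simp only [coe_dvd_coe_s17]
        exact ⟨fun hc => hd c hc.1 hc.2, fun hc => ⟨hc.trans hda, hc.trans hdb⟩⟩

end WithZero

theorem Squarefree.isUnit_of_sq_dvd_mul_sq {α : Type*} [CommMonoid α] [DecompositionMonoid α]
    {s x y : α} (hs : Squarefree s) (hxy : IsRelPrime x y) (h : x ^ 2 ∣ s * y ^ 2) : IsUnit x :=
  hs x (sq x ▸ hxy.pow.dvd_of_dvd_mul_right h)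

theorem Fin.prod_pow_two_pow_succ {M : Type*} [CommMonoid M] {n : ℕ} (f : Fin (n + 2) → M) :
    ∏ i, f i ^ 2 ^ (i : ℕ) = f 0 * (∏ i : Fin (n + 1), f i.succ ^ 2 ^ (i : ℕ)) ^ 2 := by
  rw [Fin.prod_univ_succ, ← Finset.prod_pow]
  simp only [Fin.val_zero, pow_zero, pow_one, Fin.val_succ, pow_succ, pow_mul]

section GCDMonoid

variable {α : Type*} [CommMonoidWithZero α] [GCDMonoid α]

theorem associated_and_associated_of_squarefree_mul_sq {s t x y : α}
    (hs : Squarefree s) (ht : Squarefree t) (hx : x ≠ 0)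
    (h : Associated (s * x ^ 2) (t * y ^ 2)) : Associated s t ∧ Associated x y := by
  obtain ⟨x', y', hx', hy', hu⟩ := extract_gcd x y
  set g := gcd x y
  have hg : g ≠ 0 := left_ne_zero_of_mul (hx' ▸ hx)
  have hxy' : IsRelPrime x' y' := fun d hdx hdy => isUnit_of_dvd_unit (dvd_gcd hdx hdy) hu
  rw [hx', hy', mul_pow, mul_pow, mul_left_comm s, mul_left_comm t] at h
  have h' : Associated (s * x' ^ 2) (t * y' ^ 2) := h.of_mul_left (.refl _) (pow_ne_zero 2 hg)
  have hx'u : IsUnit x' :=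
    ht.isUnit_of_sq_dvd_mul_sq hxy' ((dvd_mul_left _ _).trans h'.dvd)
  have hy'u : IsUnit y' :=
    hs.isUnit_of_sq_dvd_mul_sq hxy'.symm ((dvd_mul_left _ _).trans h'.symm.dvd)
  constructor
  · rwa [associated_mul_isUnit_left_iff (hx'u.pow 2),
      associated_mul_isUnit_right_iff (hy'u.pow 2)] at h'
  · rw [hx', hy', associated_mul_isUnit_left_iff hx'u, associated_mul_isUnit_right_iff hy'u]

theorem associated_of_associated_prod_pow_two_pow [Nontrivial α] :
    ∀ {n : ℕ} {s t : Fin (n + 1) → α}, (∀ i, Squarefree (s i)) → (∀ i, Squarefree (t i)) →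
      Associated (∏ i, s i ^ 2 ^ (i : ℕ)) (∏ i, t i ^ 2 ^ (i : ℕ)) → ∀ i, Associated (s i) (t i)
  | 0, s, t, _, _, h, i => by simpa [Fin.fin_one_eq_zero i] using h
  | n + 1, s, t, hs, ht, h, i => by
    rw [Fin.prod_pow_two_pow_succ, Fin.prod_pow_two_pow_succ] at h
    have hx : ∏ i : Fin (n + 1), s i.succ ^ 2 ^ (i : ℕ) ≠ 0 :=
      Finset.prod_ne_zero_iff.mpr fun j _ => pow_ne_zero _ (hs j.succ).ne_zero
    obtain ⟨h0, hsucc⟩ := associated_and_associated_of_squarefree_mul_sq (hs 0) (ht 0) hx h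
    exact i.cases h0
      (associated_of_associated_prod_pow_two_pow (fun j => hs j.succ) (fun j => ht j.succ) hsucc)

end GCDMonoid

theorem stmt_17 {H : Type*} [CancelCommMonoid H]
    (hgcd : ∀ a b : H, ∃ d : H, d ∣ a ∧ d ∣ b ∧ ∀ c : H, c ∣ a → c ∣ b → c ∣ d)
    {n : ℕ} (s t : Fin (n + 1) → H)
    (hs : ∀ i, Squarefree (s i)) (ht : ∀ i, Squarefree (t i))
    (hassoc : Associated (∏ i, (s i) ^ (2 ^ i.val)) (∏ i, (t i) ^ (2 ^ i.val))) :
    ∀ i, Associated (s i) (t i) := by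
  obtain ⟨_⟩ := WithZero.isGCDMonoid_of_exists_gcd hgcd
  have hassoc' := WithZero.associated_coe_s17.mpr hassoc
  simp only [← WithZero.coeMonoidHom_apply, map_prod, map_pow] at hassoc'
  intro i
  exact WithZero.associated_coe_s17.mp <| associated_of_associated_prod_pow_two_pow
    (fun i => WithZero.squarefree_coe.mpr (hs i)) (fun i => WithZero.squarefree_coe.mpr (ht i))
    hassoc' i
end
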